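/- arXiv:2305.02165 — 3 statements merged into one kernel-verified Lean document; each statement's English description precedes it below -/
import Mathlib

section
/- Under the setting of the generic proximal update P(z^k - z^{k+1}) ∈ F(z^{k+1}) with P symmetric positive semi-definite and L convex-concave, the ergodic averages x̄^k = (1/k)∑_{i=1}^k x^i and λ̄^k = (1/k)∑_{i=1}^k λ^i satisfy, for any (x, λ): L(x̄^k, λ) - L(x, λ̄^k) ≤ ‖z - z^0‖²_P / (2k). -/
open Matrix Finset

/-! The subgradient inclusions at `z^{i+1}` bound the one-step saddle gap
`L(x^{i+1}, λ) - L(x, λ^{i+1})` by `⟪P(z^i - z^{i+1}), z^{i+1} - z⟫`, and since `P` is symmetric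
positive semidefinite the three-point identity bounds this by
`(‖z - z^i‖²_P - ‖z - z^{i+1}‖²_P) / 2`. Summing over `i < k` telescopes to `‖z - z^0‖²_P / 2`,
and Jensen's inequality in each argument of `L` moves the average inside. -/

/-- `g` is a subgradient of `f` at `x`. -/
def IsSubgradAt {ι : Type*} [Fintype ι] (f : (ι → ℝ) → ℝ) (x g : ι → ℝ) : Prop :=
  ∀ y, f x + g ⬝ᵥ (y - x) ≤ f y

theorem Matrix.IsSymm.dotProduct_mulVec_comm {ι : Type*} [Fintype ι] {P : Matrix ι ι ℝ}
    (hP : P.IsSymm) (u v : ι → ℝ) : u ⬝ᵥ (P *ᵥ v) = v ⬝ᵥ (P *ᵥ u) := by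
  rw [dotProduct_mulVec, ← mulVec_transpose, hP.eq, dotProduct_comm]

theorem Matrix.PosSemidef.dotProduct_mulVec_sub_le {ι : Type*} [Fintype ι]
    {P : Matrix ι ι ℝ} (hP : P.PosSemidef) (u v w : ι → ℝ) :
    (P *ᵥ (u - v)) ⬝ᵥ (v - w)
      ≤ ((w - u) ⬝ᵥ (P *ᵥ (w - u)) - (w - v) ⬝ᵥ (P *ᵥ (w - v))) / 2 := by
  have hsymm : P.IsSymm := isHermitian_iff_isSymm.1 hP.isHermitian
  have hwu : w - u = (w - v) - (u - v) := by abel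
  have hvw : v - w = -(w - v) := by abel
  rw [hwu, hvw, dotProduct_neg, dotProduct_comm]
  have hd : 0 ≤ (u - v) ⬝ᵥ (P *ᵥ (u - v)) := by simpa using hP.dotProduct_mulVec_nonneg (u - v)
  have hcomm := hsymm.dotProduct_mulVec_comm (w - v) (u - v)
  generalize w - v = b at *
  generalize u - v = d at *
  simp only [sub_dotProduct, dotProduct_sub, mulVec_sub]
  linarith

theorem saddle_gap_le_of_isSubgradAt {ι κ : Type*} [Fintype ι] [Fintype κ]
    {L : (ι → ℝ) → (κ → ℝ) → ℝ} {x₀ x : ι → ℝ} {l₀ l : κ → ℝ} {g : ι ⊕ κ → ℝ}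
    (hx : IsSubgradAt (fun x => L x l₀) x₀ (fun i => g (Sum.inl i)))
    (hl : IsSubgradAt (fun l => -L x₀ l) l₀ (fun j => g (Sum.inr j))) :
    L x₀ l - L x l₀ ≤ g ⬝ᵥ (Sum.elim x₀ l₀ - Sum.elim x l) := by
  have hsplit : g ⬝ᵥ (Sum.elim x₀ l₀ - Sum.elim x l)
      = -((fun i => g (Sum.inl i)) ⬝ᵥ (x - x₀) + (fun j => g (Sum.inr j)) ⬝ᵥ (l - l₀)) := by
    rw [← Sum.elim_comp_inl_inr g, ← Sum.elim_sub_sub, sumElim_dotProduct_sumElim,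
      ← neg_sub x₀, ← neg_sub l₀, dotProduct_neg, dotProduct_neg]
    simp only [Function.comp_def, Sum.elim_inl, Sum.elim_inr]
    ring
  linarith [hx x, hl l]

theorem Finset.sum_range_le_of_le_sub_succ {α : Type*} [AddCommGroup α] [PartialOrder α]
    [IsOrderedAddMonoid α] {f a : ℕ → α} (h : ∀ i, f i ≤ a i - a (i + 1)) {k : ℕ}
    (hk : 0 ≤ a k) : ∑ i ∈ range k, f i ≤ a 0 :=
  calc ∑ i ∈ range k, f i ≤ ∑ i ∈ range k, (a i - a (i + 1)) := sum_le_sum fun i _ => h i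
    _ = a 0 - a k := sum_range_sub' a k
    _ ≤ a 0 := sub_le_self _ hk

theorem saddle_gap_average_le {E F ι : Type*} [AddCommGroup E] [Module ℝ E]
    [AddCommGroup F] [Module ℝ F] {L : E → F → ℝ}
    (hcvx : ∀ l, ConvexOn ℝ Set.univ (fun x => L x l))
    (hccv : ∀ x, ConcaveOn ℝ Set.univ (fun l => L x l))
    {s : Finset ι} (hs : s.Nonempty) (xs : ι → E) (ls : ι → F) (x : E) (l : F) :
    L ((#s : ℝ)⁻¹ • ∑ i ∈ s, xs i) l - L x ((#s : ℝ)⁻¹ • ∑ i ∈ s, ls i)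
      ≤ (#s : ℝ)⁻¹ * ∑ i ∈ s, (L (xs i) l - L x (ls i)) := by
  have hw₀ : ∀ i ∈ s, (0 : ℝ) ≤ (#s : ℝ)⁻¹ := fun _ _ => by positivity
  have hw₁ : ∑ _i ∈ s, (#s : ℝ)⁻¹ = 1 := by
    rw [sum_const, nsmul_eq_mul, mul_inv_cancel₀ (by exact_mod_cast hs.card_pos.ne')]
  have hx := (hcvx l).map_sum_le hw₀ hw₁ fun i _ => Set.mem_univ (xs i)
  have hl := (hccv x).le_map_sum hw₀ hw₁ fun i _ => Set.mem_univ (ls i)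
  simp only [smul_eq_mul, ← smul_sum, ← mul_sum] at hx hl
  rw [sum_sub_distrib, mul_sub]
  linarith

/-- `O(1/k)` ergodic rate of the generic update `P(z^k - z^{k+1}) ∈ F(z^{k+1})`. -/
theorem ergodic_rate_generic {n m : ℕ} (L : (Fin n → ℝ) → (Fin m → ℝ) → ℝ)
    (hcvx : ∀ lam, ConvexOn ℝ Set.univ (fun x => L x lam))
    (hccv : ∀ x, ConcaveOn ℝ Set.univ (fun lam => L x lam))
    (P : Matrix (Fin n ⊕ Fin m) (Fin n ⊕ Fin m) ℝ) (hP : P.PosSemidef)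
    (xs : ℕ → Fin n → ℝ) (ls : ℕ → Fin m → ℝ)
    (hgx : ∀ k, IsSubgradAt (fun x => L x (ls (k+1))) (xs (k+1))
      (fun i => (P *ᵥ (Sum.elim (xs k) (ls k) - Sum.elim (xs (k+1)) (ls (k+1)))) (Sum.inl i)))
    (hgl : ∀ k, IsSubgradAt (fun l => -L (xs (k+1)) l) (ls (k+1))
      (fun j => (P *ᵥ (Sum.elim (xs k) (ls k) - Sum.elim (xs (k+1)) (ls (k+1)))) (Sum.inr j)))
    (k : ℕ) (hk : 1 ≤ k) (x : Fin n → ℝ) (lam : Fin m → ℝ) :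
    L ((k : ℝ)⁻¹ • ∑ i ∈ range k, xs (i+1)) lam
      - L x ((k : ℝ)⁻¹ • ∑ i ∈ range k, ls (i+1))
      ≤ ((Sum.elim x lam - Sum.elim (xs 0) (ls 0))
          ⬝ᵥ (P *ᵥ (Sum.elim x lam - Sum.elim (xs 0) (ls 0)))) / (2 * k) := by
  set z := Sum.elim x lam
  set Z : ℕ → Fin n ⊕ Fin m → ℝ := fun i => Sum.elim (xs i) (ls i)
  have hstep : ∀ i, L (xs (i+1)) lam - L x (ls (i+1))
      ≤ (z - Z i) ⬝ᵥ (P *ᵥ (z - Z i)) / 2 - (z - Z (i+1)) ⬝ᵥ (P *ᵥ (z - Z (i+1))) / 2 :=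
    fun i => (saddle_gap_le_of_isSubgradAt (hgx i) (hgl i)).trans <| by
      rw [← sub_div]; exact hP.dotProduct_mulVec_sub_le (Z i) (Z (i+1)) z
  have hsum := sum_range_le_of_le_sub_succ hstep (k := k)
    (div_nonneg (by simpa using hP.dotProduct_mulVec_nonneg (z - Z k)) zero_le_two)
  have havg := saddle_gap_average_le hcvx hccv ⟨0, mem_range.2 hk⟩
    (fun i => xs (i+1)) (fun i => ls (i+1)) x lam
  rw [card_range] at havg
  calc _ ≤ (k : ℝ)⁻¹ * ∑ i ∈ range k, (L (xs (i+1)) lam - L x (ls (i+1))) := havg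
    _ ≤ (k : ℝ)⁻¹ * ((z - Z 0) ⬝ᵥ (P *ᵥ (z - Z 0)) / 2) := by gcongr
    _ = _ := by rw [inv_mul_eq_div, div_div, mul_comm]
end

section
/- Ergodic rate of linearized PDHG: suppose f and g* are convex and L-smooth, and iterates follow x^{k+1} = x^k - η(∇f(x^k) - Aᵀλ^k), λ^{k+1} = λ^k - η(∇g*(λ^k) + A(2x^{k+1} - x^k)). Then for 0 < η ≤ 1/(L + ‖A‖₂), the ergodic averages satisfy L(x̄^k, λ) - L(x, λ̄^k) ≤ ‖z - z^0‖²_P/(2k) with P = [[ (1/η)I, Aᵀ ], [ A, (1/η)I ]], where L(x, λ) = f(x) - λᵀAx - g*(λ). -/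
/-!
Write `z = (x, λ)`. One step of linearized PDHG is the preconditioned step
`P (zᵏ - zᵏ⁺¹) = Fᵏ⁺¹` with `Fᵏ⁺¹ = (∇f xᵏ - Aᵀ λᵏ⁺¹, ∇g* λᵏ + A xᵏ⁺¹)`. Convexity and
`L`-smoothness bound the one-step gap `L(xᵏ⁺¹, λ) - L(x, λᵏ⁺¹)` by
`⟪Fᵏ⁺¹, zᵏ⁺¹ - z⟫ + (L/2) ‖zᵏ - zᵏ⁺¹‖²`, and the three-point identity for the symmetric
matrix `P` rewrites `2 ⟪Fᵏ⁺¹, zᵏ⁺¹ - z⟫` as `‖zᵏ - z‖²_P - ‖zᵏ⁺¹ - z‖²_P - ‖zᵏ - zᵏ⁺¹‖²_P`.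
Since `‖A‖₂` bounds the off-diagonal blocks, `P ⪰ L • 1` when `η ≤ 1 / (L + ‖A‖₂)`, so the last
term absorbs the smoothness error. Summing telescopes, and Jensen's inequality for the
convex-concave Lagrangian passes the bound to the ergodic averages.
-/

open Matrix Finset

/-- The ℓ₂ operator (spectral) norm of a matrix. -/
noncomputable def matrixSpectralNorm {m n : ℕ} (A : Matrix (Fin m) (Fin n) ℝ) : ℝ :=
  ‖LinearMap.toContinuousLinearMap (Matrix.toEuclideanLin A)‖

section Convexity

variable {ι : Type*} [Fintype ι] {f : (ι → ℝ) → ℝ} {Df : (ι → ℝ) → ι → ℝ}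

theorem convexOn_univ_of_gradient_le (hf : ∀ x y, f x + Df x ⬝ᵥ (y - x) ≤ f y) :
    ConvexOn ℝ Set.univ f := by
  refine ⟨convex_univ, fun x _ y _ a b ha hb hab => ?_⟩
  set c := a • x + b • y
  have hx := hf c x
  have hy := hf c y
  have hcomb : a * (Df c ⬝ᵥ (x - c)) + b * (Df c ⬝ᵥ (y - c)) = 0 := by
    rw [← smul_eq_mul, ← smul_eq_mul, ← dotProduct_smul, ← dotProduct_smul, ← dotProduct_add,
      smul_sub, smul_sub, sub_add_sub_comm, ← add_smul, hab, one_smul, sub_self, dotProduct_zero]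
  have hfc : f c = a * f c + b * f c := by rw [← add_mul, hab, one_mul]
  simp only [smul_eq_mul]
  nlinarith [mul_le_mul_of_nonneg_left hx ha, mul_le_mul_of_nonneg_left hy hb]

theorem sub_le_dotProduct_add_of_smooth {Lc : ℝ}
    (hconv : ∀ x y, f x + Df x ⬝ᵥ (y - x) ≤ f y)
    (hsmooth : ∀ x y, f y ≤ f x + Df x ⬝ᵥ (y - x) + (Lc/2) * ((y - x) ⬝ᵥ (y - x)))
    (x₀ x₁ x : ι → ℝ) :
    f x₁ - f x ≤ Df x₀ ⬝ᵥ (x₁ - x) + Lc / 2 * ((x₀ - x₁) ⬝ᵥ (x₀ - x₁)) := by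
  have hup := hsmooth x₀ x₁
  have hlow := hconv x₀ x
  rw [← neg_sub x₁ x₀, neg_dotProduct_neg]
  simp only [dotProduct_sub] at hup hlow ⊢
  linarith

end Convexity

theorem ConvexOn.map_finset_average_le {α E : Type*} [AddCommGroup E] [Module ℝ E] {g : E → ℝ}
    (hg : ConvexOn ℝ Set.univ g) {s : Finset α} (hs : s.Nonempty) (p : α → E) :
    g ((#s : ℝ)⁻¹ • ∑ i ∈ s, p i) ≤ (#s : ℝ)⁻¹ * ∑ i ∈ s, g (p i) := by
  have hcard : (#s : ℝ) ≠ 0 := by exact_mod_cast hs.card_pos.ne'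
  have h := hg.map_sum_le (t := s) (w := fun _ => (#s : ℝ)⁻¹) (p := p)
    (fun _ _ => by positivity) (by simp [hcard]) (fun _ _ => Set.mem_univ _)
  simpa only [← smul_sum, smul_eq_mul, ← mul_sum] using h

theorem Matrix.IsSymm.two_mul_mulVec_sub_dotProduct_sub {ι R : Type*} [Fintype ι] [CommRing R]
    {P : Matrix ι ι R} (hP : P.IsSymm) (a b c : ι → R) :
    2 * ((P *ᵥ (a - b)) ⬝ᵥ (b - c)) = (a - c) ⬝ᵥ (P *ᵥ (a - c)) - (b - c) ⬝ᵥ (P *ᵥ (b - c))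
      - (a - b) ⬝ᵥ (P *ᵥ (a - b)) := by
  have hsymm : ∀ u v : ι → R, (P *ᵥ u) ⬝ᵥ v = u ⬝ᵥ (P *ᵥ v) := fun u v => by
    rw [← vecMul_transpose, ← dotProduct_mulVec, hP.eq]
  rw [show a - c = (a - b) + (b - c) by abel, mulVec_add, dotProduct_add, add_dotProduct,
    add_dotProduct, ← hsymm (a - b) (b - c), dotProduct_comm (b - c) (P *ᵥ (a - b))]
  ring

theorem two_mul_abs_dotProduct_mulVec_le {m n : ℕ} (A : Matrix (Fin m) (Fin n) ℝ)
    (u : Fin n → ℝ) (w : Fin m → ℝ) :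
    2 * |w ⬝ᵥ (A *ᵥ u)| ≤ matrixSpectralNorm A * (u ⬝ᵥ u + w ⬝ᵥ w) := by
  set T := LinearMap.toContinuousLinearMap (toEuclideanLin A)
  have hsq : ∀ {p : ℕ} (v : Fin p → ℝ), v ⬝ᵥ v = ‖WithLp.toLp 2 v‖ ^ 2 := fun v => by
    rw [← real_inner_self_eq_norm_sq, EuclideanSpace.inner_toLp_toLp, star_trivial]
  have hinner : w ⬝ᵥ (A *ᵥ u) = inner ℝ (WithLp.toLp 2 w) (T (WithLp.toLp 2 u)) := by
    rw [dotProduct_comm]; rfl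
  have hCS : |w ⬝ᵥ (A *ᵥ u)| ≤ ‖WithLp.toLp 2 w‖ * (‖T‖ * ‖WithLp.toLp 2 u‖) := by
    rw [hinner]
    exact (abs_real_inner_le_norm _ _).trans (by gcongr; exact T.le_opNorm _)
  rw [hsq u, hsq w, matrixSpectralNorm]
  nlinarith [two_mul_le_add_sq ‖WithLp.toLp 2 u‖ ‖WithLp.toLp 2 w‖, norm_nonneg T]

section PDHG

variable {ι κ : Type*}

noncomputable def pdhgMatrix [DecidableEq ι] [DecidableEq κ] (A : Matrix κ ι ℝ) (η : ℝ) :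
    Matrix (ι ⊕ κ) (ι ⊕ κ) ℝ :=
  fromBlocks ((1/η) • 1) Aᵀ A ((1/η) • 1)

theorem isSymm_pdhgMatrix [DecidableEq ι] [DecidableEq κ] (A : Matrix κ ι ℝ) (η : ℝ) :
    (pdhgMatrix A η).IsSymm :=
  IsSymm.fromBlocks (isSymm_one.smul _) (transpose_transpose A) (isSymm_one.smul _)

variable [Fintype ι] [Fintype κ] {f : (ι → ℝ) → ℝ} {gs : (κ → ℝ) → ℝ}
  {Df : (ι → ℝ) → ι → ℝ} {Dg : (κ → ℝ) → κ → ℝ} {A : Matrix κ ι ℝ}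

def lagrangian (f : (ι → ℝ) → ℝ) (gs : (κ → ℝ) → ℝ) (A : Matrix κ ι ℝ) (x : ι → ℝ)
    (lam : κ → ℝ) : ℝ :=
  f x - lam ⬝ᵥ (A *ᵥ x) - gs lam

theorem convexOn_lagrangian_left (hf : ∀ x y, f x + Df x ⬝ᵥ (y - x) ≤ f y) (lam : κ → ℝ) :
    ConvexOn ℝ Set.univ (fun x => lagrangian f gs A x lam) :=
  convexOn_univ_of_gradient_le (Df := fun x => Df x - Aᵀ *ᵥ lam) fun x y => by
    have := hf x y
    simp only [lagrangian, sub_dotProduct, dotProduct_sub, mulVec_transpose,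
      dotProduct_mulVec] at this ⊢
    linarith

theorem convexOn_neg_lagrangian_right (hg : ∀ u v, gs u + Dg u ⬝ᵥ (v - u) ≤ gs v) (x : ι → ℝ) :
    ConvexOn ℝ Set.univ (fun lam => -lagrangian f gs A x lam) :=
  convexOn_univ_of_gradient_le (Df := fun lam => Dg lam + A *ᵥ x) fun u v => by
    have := hg u v
    simp only [lagrangian, add_dotProduct, dotProduct_sub, dotProduct_comm (A *ᵥ x)] at this ⊢
    linarith

theorem lagrangian_average_sub_le (hf : ∀ x y, f x + Df x ⬝ᵥ (y - x) ≤ f y)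
    (hg : ∀ u v, gs u + Dg u ⬝ᵥ (v - u) ≤ gs v) {α : Type*} {s : Finset α} (hs : s.Nonempty)
    (xs : α → ι → ℝ) (ls : α → κ → ℝ) (x : ι → ℝ) (lam : κ → ℝ) :
    lagrangian f gs A ((#s : ℝ)⁻¹ • ∑ i ∈ s, xs i) lam
        - lagrangian f gs A x ((#s : ℝ)⁻¹ • ∑ i ∈ s, ls i)
      ≤ (#s : ℝ)⁻¹ * ∑ i ∈ s, (lagrangian f gs A (xs i) lam - lagrangian f gs A x (ls i)) := by
  have hx := (convexOn_lagrangian_left (A := A) (gs := gs) hf lam).map_finset_average_le hs xs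
  have hl := (convexOn_neg_lagrangian_right (A := A) (f := f) hg x).map_finset_average_le hs ls
  simp only [sum_neg_distrib] at hl
  rw [sum_sub_distrib, mul_sub]
  linarith

theorem lagrangian_sub_le_of_smooth {Lc : ℝ} (hfconv : ∀ x y, f x + Df x ⬝ᵥ (y - x) ≤ f y)
    (hfsmooth : ∀ x y, f y ≤ f x + Df x ⬝ᵥ (y - x) + (Lc/2) * ((y - x) ⬝ᵥ (y - x)))
    (hgconv : ∀ u v, gs u + Dg u ⬝ᵥ (v - u) ≤ gs v)
    (hgsmooth : ∀ u v, gs v ≤ gs u + Dg u ⬝ᵥ (v - u) + (Lc/2) * ((v - u) ⬝ᵥ (v - u)))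
    (x₀ x₁ x : ι → ℝ) (l₀ l₁ lam : κ → ℝ) :
    lagrangian f gs A x₁ lam - lagrangian f gs A x l₁
      ≤ Sum.elim (Df x₀ - Aᵀ *ᵥ l₁) (Dg l₀ + A *ᵥ x₁) ⬝ᵥ (Sum.elim x₁ l₁ - Sum.elim x lam)
        + Lc / 2 * ((Sum.elim x₀ l₀ - Sum.elim x₁ l₁) ⬝ᵥ (Sum.elim x₀ l₀ - Sum.elim x₁ l₁)) := by
  have hf := sub_le_dotProduct_add_of_smooth hfconv hfsmooth x₀ x₁ x
  have hg := sub_le_dotProduct_add_of_smooth hgconv hgsmooth l₀ l₁ lam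
  rw [← Sum.elim_sub_sub, ← Sum.elim_sub_sub, sumElim_dotProduct_sumElim,
    sumElim_dotProduct_sumElim]
  set dx := (x₀ - x₁) ⬝ᵥ (x₀ - x₁)
  set dl := (l₀ - l₁) ⬝ᵥ (l₀ - l₁)
  simp only [lagrangian, sub_dotProduct, add_dotProduct, dotProduct_sub,
    dotProduct_comm (A *ᵥ x₁)] at hf hg ⊢
  simp only [mulVec_transpose, dotProduct_mulVec]
  linarith

variable [DecidableEq ι] [DecidableEq κ]

theorem dotProduct_pdhgMatrix_mulVec_sumElim (A : Matrix κ ι ℝ) (η : ℝ) (u : ι → ℝ)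
    (w : κ → ℝ) :
    Sum.elim u w ⬝ᵥ (pdhgMatrix A η *ᵥ Sum.elim u w)
      = η⁻¹ * (u ⬝ᵥ u + w ⬝ᵥ w) + 2 * (w ⬝ᵥ (A *ᵥ u)) := by
  rw [pdhgMatrix, fromBlocks_mulVec, sumElim_dotProduct_sumElim]
  simp only [Sum.elim_comp_inl, Sum.elim_comp_inr, smul_mulVec, one_mulVec, dotProduct_add,
    add_dotProduct, dotProduct_smul, smul_dotProduct, smul_eq_mul, mulVec_transpose,
    dotProduct_mulVec, dotProduct_comm u]
  ring

theorem pdhgMatrix_mulVec_sub_of_update {η : ℝ} (hη : η ≠ 0) {x₀ x₁ p : ι → ℝ}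
    {l₀ l₁ q : κ → ℝ} (hx : x₁ = x₀ - η • (p - Aᵀ *ᵥ l₀))
    (hl : l₁ = l₀ - η • (q + A *ᵥ (2 • x₁ - x₀))) :
    pdhgMatrix A η *ᵥ (Sum.elim x₀ l₀ - Sum.elim x₁ l₁)
      = Sum.elim (p - Aᵀ *ᵥ l₁) (q + A *ᵥ x₁) := by
  have hx' : η⁻¹ • (x₀ - x₁) = p - Aᵀ *ᵥ l₀ := by rw [hx, sub_sub_cancel, inv_smul_smul₀ hη]
  have hl' : η⁻¹ • (l₀ - l₁) = q + A *ᵥ (2 • x₁ - x₀) := by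
    rw [hl, sub_sub_cancel, inv_smul_smul₀ hη]
  rw [← Sum.elim_sub_sub, pdhgMatrix, fromBlocks_mulVec]
  simp only [Sum.elim_comp_inl, Sum.elim_comp_inr, smul_mulVec, one_mulVec, one_div, hx', hl']
  congr 1
  · rw [mulVec_sub]; abel
  · rw [mulVec_sub, mulVec_sub, two_smul, mulVec_add]; abel

end PDHG

theorem mul_dotProduct_self_le_pdhgMatrix {m n : ℕ} (A : Matrix (Fin m) (Fin n) ℝ) {Lc η : ℝ}
    (hη : 0 < η) (hηA : η ≤ 1 / (Lc + matrixSpectralNorm A)) (z : Fin n ⊕ Fin m → ℝ) :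
    Lc * (z ⬝ᵥ z) ≤ z ⬝ᵥ (pdhgMatrix A η *ᵥ z) := by
  obtain ⟨u, w, rfl⟩ : ∃ u w, z = Sum.elim u w := ⟨_, _, (Sum.elim_comp_inl_inr z).symm⟩
  -- `1 / 0 = 0`, so `0 < η` rules out `Lc + ‖A‖₂ ≤ 0`
  have hpos : 0 < Lc + matrixSpectralNorm A := by
    by_contra h
    exact (hη.trans_le hηA).not_ge (one_div_nonpos.mpr (not_lt.mp h))
  have hinv : Lc + matrixSpectralNorm A ≤ η⁻¹ := by
    rwa [le_inv_comm₀ hpos hη, ← one_div]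
  have hnorm : 0 ≤ u ⬝ᵥ u + w ⬝ᵥ w := by
    simpa using add_nonneg (dotProduct_self_star_nonneg u) (dotProduct_self_star_nonneg w)
  have hA := two_mul_abs_dotProduct_mulVec_le A u w
  rw [dotProduct_pdhgMatrix_mulVec_sumElim, sumElim_dotProduct_sumElim]
  nlinarith [neg_abs_le (w ⬝ᵥ (A *ᵥ u)), mul_le_mul_of_nonneg_right hinv hnorm]

theorem dotProduct_pdhgMatrix_mulVec_self_nonneg {m n : ℕ} (A : Matrix (Fin m) (Fin n) ℝ)
    {Lc η : ℝ} (hLc : 0 ≤ Lc) (hη : 0 < η) (hηA : η ≤ 1 / (Lc + matrixSpectralNorm A))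
    (z : Fin n ⊕ Fin m → ℝ) :
    0 ≤ z ⬝ᵥ (pdhgMatrix A η *ᵥ z) :=
  (mul_nonneg hLc (by simpa using dotProduct_self_star_nonneg z)).trans
    (mul_dotProduct_self_le_pdhgMatrix A hη hηA z)

theorem two_mul_lagrangian_sub_le_of_pdhg_step {m n : ℕ} {f : (Fin n → ℝ) → ℝ}
    {gs : (Fin m → ℝ) → ℝ} {Df : (Fin n → ℝ) → Fin n → ℝ} {Dg : (Fin m → ℝ) → Fin m → ℝ}
    {Lc : ℝ} (hfconv : ∀ x y, f x + Df x ⬝ᵥ (y - x) ≤ f y)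
    (hfsmooth : ∀ x y, f y ≤ f x + Df x ⬝ᵥ (y - x) + (Lc/2) * ((y - x) ⬝ᵥ (y - x)))
    (hgconv : ∀ u v, gs u + Dg u ⬝ᵥ (v - u) ≤ gs v)
    (hgsmooth : ∀ u v, gs v ≤ gs u + Dg u ⬝ᵥ (v - u) + (Lc/2) * ((v - u) ⬝ᵥ (v - u)))
    {A : Matrix (Fin m) (Fin n) ℝ} {η : ℝ} (hη : 0 < η)
    (hηA : η ≤ 1 / (Lc + matrixSpectralNorm A)) {x₀ x₁ : Fin n → ℝ} {l₀ l₁ : Fin m → ℝ}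
    (hx : x₁ = x₀ - η • (Df x₀ - Aᵀ *ᵥ l₀))
    (hl : l₁ = l₀ - η • (Dg l₀ + A *ᵥ (2 • x₁ - x₀))) (x : Fin n → ℝ) (lam : Fin m → ℝ) :
    2 * (lagrangian f gs A x₁ lam - lagrangian f gs A x l₁)
      ≤ (Sum.elim x₀ l₀ - Sum.elim x lam) ⬝ᵥ (pdhgMatrix A η *ᵥ (Sum.elim x₀ l₀ - Sum.elim x lam))
        - (Sum.elim x₁ l₁ - Sum.elim x lam)
          ⬝ᵥ (pdhgMatrix A η *ᵥ (Sum.elim x₁ l₁ - Sum.elim x lam)) := by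
  have hgap := lagrangian_sub_le_of_smooth (A := A) hfconv hfsmooth hgconv hgsmooth
    x₀ x₁ x l₀ l₁ lam
  have hthree := (isSymm_pdhgMatrix A η).two_mul_mulVec_sub_dotProduct_sub
    (Sum.elim x₀ l₀) (Sum.elim x₁ l₁) (Sum.elim x lam)
  rw [← pdhgMatrix_mulVec_sub_of_update hη.ne' hx hl] at hgap
  have hcoer := mul_dotProduct_self_le_pdhgMatrix A hη hηA (Sum.elim x₀ l₀ - Sum.elim x₁ l₁)
  linarith

/-- `O(1/k)` ergodic rate of linearized PDHG with `0 < η ≤ 1/(L + ‖A‖₂)` for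
`L(x,λ) = f(x) - λᵀAx - g*(λ)`, `f` and `g*` convex and `L`-smooth. -/
theorem ergodic_rate_linearized_pdhg {n m : ℕ} (f : (Fin n → ℝ) → ℝ)
    (gs : (Fin m → ℝ) → ℝ) (Df : (Fin n → ℝ) → (Fin n → ℝ))
    (Dg : (Fin m → ℝ) → (Fin m → ℝ)) (Lc : ℝ) (hLc : 0 ≤ Lc)
    (hfconv : ∀ x y, f x + Df x ⬝ᵥ (y - x) ≤ f y)
    (hfsmooth : ∀ x y, f y ≤ f x + Df x ⬝ᵥ (y - x) + (Lc/2) * ((y - x) ⬝ᵥ (y - x)))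
    (hgconv : ∀ u v, gs u + Dg u ⬝ᵥ (v - u) ≤ gs v)
    (hgsmooth : ∀ u v, gs v ≤ gs u + Dg u ⬝ᵥ (v - u) + (Lc/2) * ((v - u) ⬝ᵥ (v - u)))
    (A : Matrix (Fin m) (Fin n) ℝ) (η : ℝ) (hη : 0 < η)
    (hηA : η ≤ 1 / (Lc + matrixSpectralNorm A))
    (L : (Fin n → ℝ) → (Fin m → ℝ) → ℝ)
    (hL : ∀ x lam, L x lam = f x - lam ⬝ᵥ (A *ᵥ x) - gs lam)
    (P : Matrix (Fin n ⊕ Fin m) (Fin n ⊕ Fin m) ℝ)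
    (hPdef : P = fromBlocks ((1/η) • (1 : Matrix (Fin n) (Fin n) ℝ)) Aᵀ A
      ((1/η) • (1 : Matrix (Fin m) (Fin m) ℝ)))
    (xs : ℕ → Fin n → ℝ) (ls : ℕ → Fin m → ℝ)
    (hxupdate : ∀ k, xs (k+1) = xs k - η • (Df (xs k) - Aᵀ *ᵥ ls k))
    (hlupdate : ∀ k, ls (k+1) = ls k - η • (Dg (ls k) + A *ᵥ (2 • xs (k+1) - xs k)))
    (k : ℕ) (hk : 1 ≤ k) (x : Fin n → ℝ) (lam : Fin m → ℝ) :
    L ((k : ℝ)⁻¹ • ∑ i ∈ range k, xs (i+1)) lam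
      - L x ((k : ℝ)⁻¹ • ∑ i ∈ range k, ls (i+1))
      ≤ ((Sum.elim x lam - Sum.elim (xs 0) (ls 0))
          ⬝ᵥ (P *ᵥ (Sum.elim x lam - Sum.elim (xs 0) (ls 0)))) / (2 * k) := by
  obtain rfl : P = pdhgMatrix A η := hPdef
  obtain rfl : L = lagrangian f gs A := funext₂ hL
  set z : ℕ → Fin n ⊕ Fin m → ℝ := fun i => Sum.elim (xs i) (ls i)
  set D : ℕ → ℝ := fun i =>
    (z i - Sum.elim x lam) ⬝ᵥ (pdhgMatrix A η *ᵥ (z i - Sum.elim x lam))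
  set gap : ℕ → ℝ := fun i => lagrangian f gs A (xs (i+1)) lam - lagrangian f gs A x (ls (i+1))
  have htelescope : 2 * ∑ i ∈ range k, gap i ≤ D 0 := by
    have hDk : 0 ≤ D k := dotProduct_pdhgMatrix_mulVec_self_nonneg A hLc hη hηA _
    calc 2 * ∑ i ∈ range k, gap i ≤ ∑ i ∈ range k, (D i - D (i+1)) := by
          rw [mul_sum]
          exact sum_le_sum fun i _ => two_mul_lagrangian_sub_le_of_pdhg_step hfconv hfsmooth
            hgconv hgsmooth hη hηA (hxupdate i) (hlupdate i) x lam
      _ = D 0 - D k := sum_range_sub' D k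
      _ ≤ D 0 := by linarith
  have havg := lagrangian_average_sub_le (A := A) hfconv hgconv ⟨0, mem_range.mpr hk⟩
    (fun i => xs (i+1)) (fun i => ls (i+1)) x lam
  have hD0 : (Sum.elim x lam - z 0) ⬝ᵥ (pdhgMatrix A η *ᵥ (Sum.elim x lam - z 0)) = D 0 := by
    rw [← neg_sub (z 0), mulVec_neg, neg_dotProduct_neg]
  have hkpos : (0 : ℝ) < k := by exact_mod_cast hk
  rw [card_range] at havg
  rw [hD0, le_div_iff₀ (by positivity)]
  calc _ ≤ (k : ℝ)⁻¹ * (∑ i ∈ range k, gap i) * (2 * k) := by gcongr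
    _ = 2 * ∑ i ∈ range k, gap i := by field_simp
    _ ≤ D 0 := htelescope
end

section
/- Inexact generic rate: suppose iterates satisfy P(z^k - z^{k+1}) + ε^{k+1} ∈ F(z^{k+1}) with P PSD, where all iterates and the comparison point z lie in a bounded set Z of diameter D. Then L(x̄^k, λ) - L(x, λ̄^k) ≤ ‖z - z^0‖²_P/(2k) + (D/k)∑_{i=1}^k ‖ε^i‖₂ for all z = (x, λ) ∈ Z. -/
/-!
For each step, the two subgradient inequalities bound the gap `L(x^{i+1}, λ) - L(x, λ^{i+1})` by
`⟨P(z^i - z^{i+1}) + ε^{i+1}, z^{i+1} - z⟩`. The three-point inequality for `‖·‖²_P` bounds the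
`P`-part by the telescoping difference `(‖z^i - z‖²_P - ‖z^{i+1} - z‖²_P) / 2`, and Cauchy–Schwarz
bounds the error part by `D ‖ε^{i+1}‖`. Summing over `i < k` and applying Jensen's inequality in
each variable moves the gap to the ergodic averages.
-/

open Matrix Finset

/-- Euclidean norm of a vector. -/
noncomputable def evnorm {ι : Type*} [Fintype ι] (u : ι → ℝ) : ℝ := Real.sqrt (u ⬝ᵥ u)

section Vectors

variable {ι : Type*} [Fintype ι]

lemma evnorm_nonneg (u : ι → ℝ) : 0 ≤ evnorm u :=
  Real.sqrt_nonneg _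

lemma dotProduct_le_evnorm_mul_evnorm (u v : ι → ℝ) : u ⬝ᵥ v ≤ evnorm u * evnorm v := by
  simpa only [evnorm, dotProduct, sq] using Real.sum_mul_le_sqrt_mul_sqrt univ u v

lemma dotProduct_le_mul_evnorm {u v : ι → ℝ} {D : ℝ} (hv : evnorm v ≤ D) :
    u ⬝ᵥ v ≤ D * evnorm u :=
  (dotProduct_le_evnorm_mul_evnorm u v).trans <| by
    rw [mul_comm D]; exact mul_le_mul_of_nonneg_left hv (evnorm_nonneg u)

-- Expand `‖a - c‖²_P = ‖a - b‖²_P + 2 ⟨P (a - b), b - c⟩ + ‖b - c‖²_P` and drop `‖a - b‖²_P ≥ 0`.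
lemma Matrix.PosSemidef.mulVec_sub_dotProduct_sub_le {P : Matrix ι ι ℝ} (hP : P.PosSemidef)
    (a b c : ι → ℝ) :
    (P *ᵥ (a - b)) ⬝ᵥ (b - c)
      ≤ ((a - c) ⬝ᵥ (P *ᵥ (a - c)) - (b - c) ⬝ᵥ (P *ᵥ (b - c))) / 2 := by
  have hPT : Pᵀ = P := by simpa using hP.isHermitian.eq
  have hsymm : ∀ u v : ι → ℝ, u ⬝ᵥ (P *ᵥ v) = (P *ᵥ u) ⬝ᵥ v := fun u v => by
    rw [dotProduct_mulVec, ← mulVec_transpose, hPT]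
  have hab := hP.dotProduct_mulVec_nonneg (a - b)
  simp only [star_trivial] at hab
  rw [show a - c = (a - b) + (b - c) by abel, mulVec_add, dotProduct_add, add_dotProduct,
    add_dotProduct, hsymm (b - c), dotProduct_comm (P *ᵥ (b - c)), ← hsymm]
  linarith

end Vectors

lemma sub_le_dotProduct_of_isSubgradAt {ι κ : Type*} [Fintype ι] [Fintype κ]
    {L : (ι → ℝ) → (κ → ℝ) → ℝ} {x x' gx : ι → ℝ} {l l' gl : κ → ℝ}
    (hgx : IsSubgradAt (fun x => L x l') x' gx) (hgl : IsSubgradAt (fun l => -L x' l) l' gl) :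
    L x' l - L x l' ≤ Sum.elim gx gl ⬝ᵥ (Sum.elim x' l' - Sum.elim x l) := by
  have hx := hgx x
  have hl := hgl l
  rw [← neg_sub, dotProduct_neg] at hx hl
  rw [← Sum.elim_sub_sub, sumElim_dotProduct_sumElim]
  linarith

section Jensen

variable {ι E : Type*} [AddCommGroup E] [Module ℝ E] {f : E → ℝ} {s : Finset ι}

lemma ConvexOn.map_inv_card_smul_sum_le (hf : ConvexOn ℝ Set.univ f) (hs : s.Nonempty)
    (p : ι → E) :
    f ((#s : ℝ)⁻¹ • ∑ i ∈ s, p i) ≤ (#s : ℝ)⁻¹ * ∑ i ∈ s, f (p i) := by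
  have hw : ∑ _i ∈ s, (#s : ℝ)⁻¹ = 1 := by
    rw [sum_const, nsmul_eq_mul, mul_inv_cancel₀ (by exact_mod_cast hs.card_ne_zero)]
  simpa only [smul_sum, mul_sum, smul_eq_mul] using
    hf.map_sum_le (fun _ _ => by positivity) hw fun i _ => Set.mem_univ (p i)

lemma ConcaveOn.le_map_inv_card_smul_sum (hf : ConcaveOn ℝ Set.univ f) (hs : s.Nonempty)
    (p : ι → E) :
    (#s : ℝ)⁻¹ * ∑ i ∈ s, f (p i) ≤ f ((#s : ℝ)⁻¹ • ∑ i ∈ s, p i) := by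
  simpa only [Pi.neg_apply, sum_neg_distrib, mul_neg, neg_le_neg_iff] using
    hf.neg.map_inv_card_smul_sum_le hs p

end Jensen

lemma sum_range_le_of_le_telescope {g c q : ℕ → ℝ} (hq : ∀ i, 0 ≤ q i)
    (hg : ∀ i, g i ≤ (q i - q (i + 1)) / 2 + c i) (k : ℕ) :
    ∑ i ∈ range k, g i ≤ q 0 / 2 + ∑ i ∈ range k, c i := by
  calc ∑ i ∈ range k, g i ≤ ∑ i ∈ range k, ((q i - q (i + 1)) / 2 + c i) :=
        sum_le_sum fun i _ => hg i
    _ = (q 0 - q k) / 2 + ∑ i ∈ range k, c i := by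
      rw [sum_add_distrib, ← sum_div, sum_range_sub']
    _ ≤ q 0 / 2 + ∑ i ∈ range k, c i := by linarith [hq k]

lemma sub_le_of_inexact_proximal_step {ι κ : Type*} [Fintype ι] [Fintype κ]
    {L : (ι → ℝ) → (κ → ℝ) → ℝ} {P : Matrix (ι ⊕ κ) (ι ⊕ κ) ℝ} (hP : P.PosSemidef)
    {x x' gx : ι → ℝ} {l l' gl : κ → ℝ} {z e : ι ⊕ κ → ℝ} {D : ℝ}
    (hgx : IsSubgradAt (fun x => L x l') x' gx) (hgl : IsSubgradAt (fun l => -L x' l) l' gl)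
    (hstep : P *ᵥ (z - Sum.elim x' l') + e = Sum.elim gx gl)
    (hdist : evnorm (Sum.elim x' l' - Sum.elim x l) ≤ D) :
    L x' l - L x l'
      ≤ ((z - Sum.elim x l) ⬝ᵥ (P *ᵥ (z - Sum.elim x l))
          - (Sum.elim x' l' - Sum.elim x l) ⬝ᵥ (P *ᵥ (Sum.elim x' l' - Sum.elim x l))) / 2
        + D * evnorm e := by
  calc L x' l - L x l' ≤ Sum.elim gx gl ⬝ᵥ (Sum.elim x' l' - Sum.elim x l) :=
        sub_le_dotProduct_of_isSubgradAt hgx hgl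
    _ = (P *ᵥ (z - Sum.elim x' l')) ⬝ᵥ (Sum.elim x' l' - Sum.elim x l)
          + e ⬝ᵥ (Sum.elim x' l' - Sum.elim x l) := by rw [← hstep, add_dotProduct]
    _ ≤ _ := add_le_add (hP.mulVec_sub_dotProduct_sub_le _ _ _) (dotProduct_le_mul_evnorm hdist)

/-- Ergodic rate of the inexact generic update
`P(z^k - z^{k+1}) + ε^{k+1} ∈ F(z^{k+1})` over a bounded set `Z` of diameter `D`. -/
theorem ergodic_rate_inexact {n m : ℕ} (L : (Fin n → ℝ) → (Fin m → ℝ) → ℝ)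
    (hcvx : ∀ lam, ConvexOn ℝ Set.univ (fun x => L x lam))
    (hccv : ∀ x, ConcaveOn ℝ Set.univ (fun lam => L x lam))
    (P : Matrix (Fin n ⊕ Fin m) (Fin n ⊕ Fin m) ℝ) (hP : P.PosSemidef)
    (Z : Set (Fin n ⊕ Fin m → ℝ)) (D : ℝ)
    (hdiam : ∀ u ∈ Z, ∀ v ∈ Z, evnorm (u - v) ≤ D)
    (xs : ℕ → Fin n → ℝ) (ls : ℕ → Fin m → ℝ) (eps : ℕ → Fin n ⊕ Fin m → ℝ)
    (hmem : ∀ k, Sum.elim (xs k) (ls k) ∈ Z)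
    (hstep : ∀ k, ∃ gx gl,
      IsSubgradAt (fun x => L x (ls (k+1))) (xs (k+1)) gx ∧
      IsSubgradAt (fun l => -L (xs (k+1)) l) (ls (k+1)) gl ∧
      P *ᵥ (Sum.elim (xs k) (ls k) - Sum.elim (xs (k+1)) (ls (k+1))) + eps (k+1)
        = Sum.elim gx gl)
    (k : ℕ) (hk : 1 ≤ k) (x : Fin n → ℝ) (lam : Fin m → ℝ)
    (hz : Sum.elim x lam ∈ Z) :
    L ((k : ℝ)⁻¹ • ∑ i ∈ range k, xs (i+1)) lam
      - L x ((k : ℝ)⁻¹ • ∑ i ∈ range k, ls (i+1))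
      ≤ ((Sum.elim x lam - Sum.elim (xs 0) (ls 0))
          ⬝ᵥ (P *ᵥ (Sum.elim x lam - Sum.elim (xs 0) (ls 0)))) / (2 * k)
        + (D / k) * ∑ i ∈ range k, evnorm (eps (i+1)) := by
  set z := Sum.elim x lam
  set dist2 : ℕ → ℝ := fun i =>
    (Sum.elim (xs i) (ls i) - z) ⬝ᵥ (P *ᵥ (Sum.elim (xs i) (ls i) - z))
  have hgap : ∀ i, L (xs (i+1)) lam - L x (ls (i+1))
      ≤ (dist2 i - dist2 (i+1)) / 2 + D * evnorm (eps (i+1)) := fun i => by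
    obtain ⟨gx, gl, hgx, hgl, heq⟩ := hstep i
    exact sub_le_of_inexact_proximal_step hP hgx hgl heq (hdiam _ (hmem (i+1)) _ hz)
  have hsum :=
    sum_range_le_of_le_telescope (q := dist2) (fun _ => hP.dotProduct_mulVec_nonneg _) hgap k
  have hdist2_zero :
      dist2 0 = (z - Sum.elim (xs 0) (ls 0)) ⬝ᵥ (P *ᵥ (z - Sum.elim (xs 0) (ls 0))) := by
    simp only [dist2]
    rw [← neg_sub z, neg_dotProduct, mulVec_neg, dotProduct_neg, neg_neg]
  have hne : (range k).Nonempty := nonempty_range_iff.mpr (by omega)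
  have hx := (hcvx lam).map_inv_card_smul_sum_le hne (fun i => xs (i+1))
  have hl := (hccv x).le_map_inv_card_smul_sum hne (fun i => ls (i+1))
  rw [card_range] at hx hl
  calc _ ≤ (k : ℝ)⁻¹ * ∑ i ∈ range k, (L (xs (i+1)) lam - L x (ls (i+1))) := by
        rw [sum_sub_distrib, mul_sub]; linarith
    _ ≤ (k : ℝ)⁻¹ * (dist2 0 / 2 + ∑ i ∈ range k, D * evnorm (eps (i+1))) :=
        mul_le_mul_of_nonneg_left hsum (by positivity)
    _ = _ := by rw [hdist2_zero, ← mul_sum]; field_simp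
end
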